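/- arXiv:2106.02796 — 5 statements merged into one kernel-verified Lean document; each statement's English description precedes it below -/
import Mathlib

section
/- Let σ₁² ≥ … ≥ σ_d² > 0, σ² > 0, and let F ⊆ [d] be the support of a diagonal matrix S with entries s_i ≥ 0 (allowing s_i = ∞ via continuous extension). The infimum of Σ_{j∉F} σⱼ² + Σ_{ℓ∈F} σ²σ_ℓ²/(σ² + σ_ℓ² s_ℓ²) over {s_ℓ} with support constrained by |F| ≤ R equals Σ_{j∉F*} σⱼ², where F* is the set of indices of the ⌊min(R,d)⌋ largest eigenvalues, and this choice of F minimizes the residual over all admissible F. -/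
/-!
Each scaled term `σ²σ_ℓ²/(σ² + σ_ℓ² s_ℓ²)` is nonnegative and tends to `0` as `s_ℓ → ∞`, so the
infimum for a fixed support `F` is the residual `Σ_{j∉F} σⱼ²`. Since the `σⱼ²` are antitone, the
`i`-th smallest index of any `F` is at least `i`, so the initial segment of length `min(⌊R⌋, d)`
captures at least as much variance as any admissible `F` and leaves the least residual.
-/

open Finset Filter Topology

theorem Fin.val_le_val_of_strictMono {n d : ℕ} {e : Fin n → Fin d} (he : StrictMono e)
    (j : Fin n) : (j : ℕ) ≤ e j := by
  simpa using card_le_card_of_injOn e (s := Iio j) (t := Iio (e j))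
    (fun i hi => by simpa using he (by simpa using hi)) he.injective.injOn

section Rearrangement

variable {M : Type*} [AddCommMonoid M] [PartialOrder M] {d k : ℕ} {f : Fin d → M}

theorem sum_le_sum_filter_val_lt_of_antitone [IsOrderedAddMonoid M] (hf₀ : ∀ i, 0 ≤ f i)
    (hf : Antitone f) {F : Finset (Fin d)} (hF : #F ≤ k) :
    ∑ i ∈ F, f i ≤ ∑ i ∈ ({i | (i : ℕ) < k} : Finset (Fin d)), f i := by
  have hFd : #F ≤ d := by simpa using F.card_le_univ
  let e := F.orderEmbOfFin rfl
  calc ∑ i ∈ F, f i = ∑ j, f (e j) := by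
        rw [← sum_image fun _ _ _ _ h => e.injective h, F.image_orderEmbOfFin_univ rfl]
    _ ≤ ∑ j, f (Fin.castLE hFd j) :=
        sum_le_sum fun j _ => hf (Fin.val_le_val_of_strictMono e.strictMono j)
    _ = ∑ i ∈ univ.map (Fin.castLEEmb hFd), f i := by rw [sum_map]; rfl
    _ ≤ ∑ i ∈ ({i | (i : ℕ) < k} : Finset (Fin d)), f i := by
        refine sum_le_sum_of_subset_of_nonneg ?_ fun i _ _ => hf₀ i
        intro i hi
        obtain ⟨j, -, rfl⟩ := mem_map.mp hi
        simpa using j.2.trans_le hF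

theorem sum_compl_filter_val_lt_le_of_antitone [IsOrderedCancelAddMonoid M]
    (hf₀ : ∀ i, 0 ≤ f i) (hf : Antitone f) {F : Finset (Fin d)} (hF : #F ≤ k) :
    ∑ i ∈ ({i | (i : ℕ) < k} : Finset (Fin d))ᶜ, f i ≤ ∑ i ∈ Fᶜ, f i := by
  refine le_of_add_le_add_left (a := ∑ i ∈ F, f i) ?_
  rw [sum_add_sum_compl, ← sum_add_sum_compl ({i | (i : ℕ) < k} : Finset (Fin d)) f]
  exact add_le_add (sum_le_sum_filter_val_lt_of_antitone hf₀ hf hF) le_rfl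

end Rearrangement

theorem tendsto_div_add_mul_sq_atTop {a : ℝ} (ha : 0 < a) (b c : ℝ) :
    Tendsto (fun t : ℝ => c / (b + a * t ^ 2)) atTop (𝓝 0) :=
  tendsto_const_nhds.div_atTop <| tendsto_atTop_add_const_left _ _ <|
    (tendsto_pow_atTop two_ne_zero).const_mul_atTop ha

/-- Theorem 2, PCA recovery: with a dimension-counting constraint `|F| ≤ R`, the
infimum of `Σ_{j∉F} σⱼ² + Σ_{ℓ∈F} σ²σ_ℓ²/(σ² + σ_ℓ² s_ℓ²)` over supports `F` and nonnegative
scalings `s`, equals the residual `Σ_{j∉F*} σⱼ²` where `F*` consists of the indices of the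
`min(⌊R⌋, d)` largest eigenvalues. -/
theorem stmt_7 (d : ℕ) (s2 : Fin d → ℝ) (σ2 R : ℝ)
    (hs2_pos : ∀ i, 0 < s2 i) (hs2_anti : Antitone s2)
    (hσ2 : 0 < σ2) (hR : 0 < R) :
    IsGLB
      { v : ℝ | ∃ (F : Finset (Fin d)) (s : Fin d → ℝ),
          (F.card : ℝ) ≤ R ∧ (∀ i, 0 ≤ s i) ∧
          v = ∑ j ∈ Fᶜ, s2 j + ∑ l ∈ F, σ2 * s2 l / (σ2 + s2 l * (s l) ^ 2) }
      (∑ j ∈ (Finset.univ.filter fun i : Fin d => (i : ℕ) < min (Nat.floor R) d)ᶜ, s2 j) := by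
  set k := min ⌊R⌋₊ d
  set I : Finset (Fin d) := {i | (i : ℕ) < k}
  constructor
  · rintro v ⟨F, s, hF, -, rfl⟩
    have hFk : #F ≤ k := le_min (Nat.le_floor hF) (by simpa using F.card_le_univ)
    calc ∑ j ∈ Iᶜ, s2 j ≤ ∑ j ∈ Fᶜ, s2 j :=
          sum_compl_filter_val_lt_le_of_antitone (fun i => (hs2_pos i).le) hs2_anti hFk
      _ ≤ _ := le_add_of_nonneg_right <| sum_nonneg fun l _ => by
          have := hs2_pos l
          positivity
  · intro b hb
    have hI : (#I : ℝ) ≤ R := by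
      calc (#I : ℝ) ≤ ⌊R⌋₊ := by
            rw [Fin.card_filter_val_lt]
            exact_mod_cast min_le_of_right_le (min_le_left _ _)
        _ ≤ R := Nat.floor_le hR.le
    have hlim : Tendsto (fun n : ℕ =>
        ∑ j ∈ Iᶜ, s2 j + ∑ l ∈ I, σ2 * s2 l / (σ2 + s2 l * (n : ℝ) ^ 2))
        atTop (𝓝 (∑ j ∈ Iᶜ, s2 j)) := by
      simpa using tendsto_const_nhds.add <| tendsto_finsetSum I fun l _ =>
        (tendsto_div_add_mul_sq_atTop (hs2_pos l) _ _).comp tendsto_natCast_atTop_atTop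
    exact ge_of_tendsto' hlim fun n => hb ⟨I, fun _ => n, hI, fun _ => n.cast_nonneg, rfl⟩
end

section
/- Fix α > 2. In any optimal solution {Dᵢ*} of the PBA problem inf Σᵢ Dᵢ + (λ/2)Σᵢ log(σᵢ²/Dᵢ − (α−1)) subject to Dᵢ ≤ σᵢ²/α with positive total rate, at most one index i satisfies σᵢ²/(2(α−1)) < Dᵢ* < σᵢ²/α. -/
/-!
The rate `r(x) = log (σ²/x - c)`, `c = α - 1`, is strictly midpoint concave on `x > σ²/(2c)`:
`(σ²/(x+ε) - c)(σ²/(x-ε) - c) < (σ²/x - c)²` reduces to `(σ² - cx)² < (cx)²`. Moving `ε` of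
distortion from one such component to another, in either direction, keeps the total distortion
and stays feasible for small `ε`; optimality makes both changes of the rate nonnegative, while
concavity makes their sum negative.
-/

open Function Filter Topology

lemma Finset.sum_apply_update {ι α M : Type*} [Fintype ι] [DecidableEq ι] [AddCommGroup M]
    (f : ι → α → M) (D : ι → α) (i : ι) (a : α) :
    ∑ k, f k (update D i a k) = ∑ k, f k (D k) + (f i a - f i (D i)) := by
  simp_rw [apply_update f D i a]
  rw [sum_update_of_mem (mem_univ i), sum_eq_add_sum_sdiff_singleton_of_mem (mem_univ i)]
  abel

lemma forall_update_update {ι β : Type*} [DecidableEq ι] {p : ι → β → Prop} {D : ι → β}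
    {i j : ι} (hD : ∀ k, p k (D k)) {a b : β} (ha : p i a) (hb : p j b) :
    ∀ k, p k (update (update D i a) j b k) := by
  rw [forall_update_iff _ p]
  exact ⟨hb, fun k _ => (forall_update_iff D p).mpr ⟨ha, fun k _ => hD k⟩ k⟩

lemma not_isMinOn_of_transfer {ι : Type*} [Fintype ι] [DecidableEq ι] {r : ι → ℝ → ℝ}
    {μ : ℝ} (hμ : 0 < μ) {S : Set (ι → ℝ)} {D : ι → ℝ} {i j : ι} (hij : i ≠ j) {ε : ℝ}
    (hS : ∀ t ∈ ({ε, -ε} : Set ℝ), update (update D i (D i + t)) j (D j - t) ∈ S)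
    (hi : r i (D i + ε) + r i (D i - ε) < 2 * r i (D i))
    (hj : r j (D j + ε) + r j (D j - ε) < 2 * r j (D j)) :
    ¬ IsMinOn (fun E => ∑ k, E k + μ * ∑ k, r k (E k)) S D := by
  intro hmin
  have rate_change_nonneg : ∀ t ∈ ({ε, -ε} : Set ℝ),
      0 ≤ μ * (r i (D i + t) - r i (D i) + (r j (D j - t) - r j (D j))) := by
    intro t ht
    have h := isMinOn_iff.mp hmin _ (hS t ht)
    rw [Finset.sum_apply_update (fun _ x => x),
      Finset.sum_apply_update (fun _ x => x), Finset.sum_apply_update r,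
      Finset.sum_apply_update r, update_of_ne hij.symm] at h
    linarith
  have hpos := rate_change_nonneg ε (by simp)
  have hneg := rate_change_nonneg (-ε) (by simp)
  have hsum : μ * (r i (D i + ε) + r i (D i - ε) - 2 * r i (D i) +
      (r j (D j + ε) + r j (D j - ε) - 2 * r j (D j))) < 0 :=
    mul_neg_of_pos_of_neg hμ (by linarith)
  rw [← sub_eq_add_neg, sub_neg_eq_add] at hneg
  linarith

lemma rate_mul_lt_sq {s c x ε : ℝ} (hs : 0 < s) (hconc : s < 2 * c * x) (hε : 0 < ε)
    (hεx : ε < x) : (s / (x + ε) - c) * (s / (x - ε) - c) < (s / x - c) ^ 2 := by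
  have hx : 0 < x := hε.trans hεx
  have hxε : 0 < x - ε := sub_pos.mpr hεx
  rw [div_sub' (by positivity), div_sub' hxε.ne', div_sub' hx.ne', div_mul_div_comm, div_pow,
    div_lt_div_iff₀ (by positivity) (by positivity)]
  nlinarith [mul_pos (mul_pos hε hε) (mul_pos (sub_pos.mpr hconc) hs)]

lemma log_rate_add_log_rate_lt {s c x ε : ℝ} (hs : 0 < s) (hconc : s < 2 * c * x)
    (hε : 0 < ε) (hεx : ε < x) (hfeas : 0 < s / (x + ε) - c) :
    Real.log (s / (x + ε) - c) + Real.log (s / (x - ε) - c) < 2 * Real.log (s / x - c) := by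
  have hfeas' : 0 < s / (x - ε) - c := hfeas.trans_le (by gcongr; linarith)
  calc Real.log (s / (x + ε) - c) + Real.log (s / (x - ε) - c)
      = Real.log ((s / (x + ε) - c) * (s / (x - ε) - c)) :=
        (Real.log_mul hfeas.ne' hfeas'.ne').symm
    _ < Real.log ((s / x - c) ^ 2) :=
        Real.log_lt_log (by positivity) (rate_mul_lt_sq hs hconc hε hεx)
    _ = 2 * Real.log (s / x - c) := by rw [Real.log_pow, Nat.cast_ofNat]

lemma log_rate_add_log_rate_lt_of_concave {s α x ε : ℝ} (hs : 0 < s) (hα : 1 < α)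
    (hconc : s / (2 * (α - 1)) < x) (hε : 0 < ε) (hεx : ε < x) (hεs : x + ε < s / α) :
    Real.log (s / (x + ε) - (α - 1)) + Real.log (s / (x - ε) - (α - 1)) <
      2 * Real.log (s / x - (α - 1)) := by
  refine log_rate_add_log_rate_lt hs ?_ hε hεx ?_
  · rwa [div_lt_iff₀ (by linarith), mul_comm] at hconc
  · rw [sub_pos, lt_div_iff₀ (by linarith)]
    rw [lt_div_iff₀ (by linarith)] at hεs
    linarith

theorem stmt_13_general (d : ℕ) (s2 : Fin d → ℝ) (α lam : ℝ)
    (hs2_pos : ∀ i, 0 < s2 i)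
    (hα : 2 < α) (hlam : 0 < lam)
    (D : Fin d → ℝ)
    (hD_feas : ∀ i, 0 < D i ∧ D i ≤ s2 i / α)
    (hD_min : ∀ E : Fin d → ℝ, (∀ i, 0 < E i ∧ E i ≤ s2 i / α) →
      ∑ i, D i + lam / 2 * ∑ i, Real.log (s2 i / D i - (α - 1)) ≤
        ∑ i, E i + lam / 2 * ∑ i, Real.log (s2 i / E i - (α - 1))) :
    ∀ i j : Fin d, i ≠ j →
      s2 i / (2 * (α - 1)) < D i → D i < s2 i / α →
      s2 j / (2 * (α - 1)) < D j → D j < s2 j / α → False := by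
  intro i j hij hci hui hcj huj
  have small : ∀ᶠ ε in 𝓝[>] (0 : ℝ), (ε < D i ∧ ε < D j ∧
      D i + ε < s2 i / α ∧ D j + ε < s2 j / α) ∧ 0 < ε := by
    refine (eventually_nhdsWithin_of_eventually_nhds ?_).and self_mem_nhdsWithin
    simp only [← lt_sub_iff_add_lt']
    exact (eventually_lt_nhds (hD_feas i).1).and <| (eventually_lt_nhds (hD_feas j).1).and <|
      (eventually_lt_nhds (sub_pos.mpr hui)).and <| eventually_lt_nhds (sub_pos.mpr huj)
  obtain ⟨ε, ⟨hεi, hεj, hgi, hgj⟩, hε⟩ := small.exists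
  refine not_isMinOn_of_transfer (r := fun k x => Real.log (s2 k / x - (α - 1)))
    (S := {E | ∀ k, 0 < E k ∧ E k ≤ s2 k / α}) (half_pos hlam) hij ?_
    (log_rate_add_log_rate_lt_of_concave (hs2_pos i) (by linarith) hci hε hεi hgi)
    (log_rate_add_log_rate_lt_of_concave (hs2_pos j) (by linarith) hcj hε hεj hgj) hD_min
  rintro t (rfl | rfl) <;>
    refine forall_update_update (p := fun k x => 0 < x ∧ x ≤ s2 k / α) hD_feas
      ⟨?_, ?_⟩ ⟨?_, ?_⟩ <;> linarith [(hD_feas i).2, (hD_feas j).2]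

/-- Lemma 2: in any optimal solution of the PBA problem with positive total
rate, at most one component lies strictly in the concave region
`(σᵢ²/(2(α−1)), σᵢ²/α)` of its rate function. -/
theorem stmt_13 (d : ℕ) (s2 : Fin d → ℝ) (α lam : ℝ)
    (hs2_pos : ∀ i, 0 < s2 i)
    (hα : 2 < α) (hlam : 0 < lam)
    (D : Fin d → ℝ)
    (hD_feas : ∀ i, 0 < D i ∧ D i ≤ s2 i / α)
    (hrate_pos : 0 < ∑ i, Real.log (s2 i / D i - (α - 1)))
    (hD_min : ∀ E : Fin d → ℝ, (∀ i, 0 < E i ∧ E i ≤ s2 i / α) →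
      ∑ i, D i + lam / 2 * ∑ i, Real.log (s2 i / D i - (α - 1)) ≤
        ∑ i, E i + lam / 2 * ∑ i, Real.log (s2 i / E i - (α - 1))) :
    ∀ i j : Fin d, i ≠ j →
      s2 i / (2 * (α - 1)) < D i → D i < s2 i / α →
      s2 j / (2 * (α - 1)) < D j → D j < s2 j / α → False :=
  stmt_13_general d s2 α lam hs2_pos hα hlam D hD_feas hD_min
end

section
/- Let X be a real random variable and ε ~ Uniform[−1/2, 1/2] independent of X, and let Q round to the nearest integer. Then (X, Q(X + ε) − ε) has the same joint distribution as (X, X + ε'), where ε' ~ Uniform[−1/2,1/2] is independent of X. -/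
/-!
Condition on `X = x`. With `v = x + ε` one has `Q(v) - ε = x + (Q(v) - v)`, and the rounding
error `Q(v) - v` is the representative of `-v` modulo `1` in `(-1/2, 1/2]`. Since `-v` is uniform
on an interval of length one and the quotient map from any such interval onto `ℝ/ℤ` preserves
Lebesgue measure, this representative is uniform on `(-1/2, 1/2]`, i.e. has the law of `ε`.
So `Q(x + ε) - ε` and `x + ε` have the same law for every `x`, and independence lets this
fibrewise identity be integrated against the law of `X`.
-/

open MeasureTheory ProbabilityTheory Set

lemma measurable_toIocMod {p : ℝ} (hp : 0 < p) (b : ℝ) : Measurable (toIocMod hp b) :=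
  have : Fact (0 < p) := ⟨hp⟩
  measurable_subtype_coe.comp
    ((AddCircle.measurableEquivIoc p b).measurable.comp AddCircle.measurable_mk')

lemma map_toIocMod_volume_restrict_Ioc {p : ℝ} (hp : 0 < p) (a b : ℝ) :
    (volume.restrict (Ioc a (a + p))).map (toIocMod hp b) = volume.restrict (Ioc b (b + p)) := by
  have : Fact (0 < p) := ⟨hp⟩
  have hmeas : Measurable (AddCircle.equivIoc p b) := (AddCircle.measurableEquivIoc p b).measurable
  calc (volume.restrict (Ioc a (a + p))).map (toIocMod hp b)
      = (((volume.restrict (Ioc a (a + p))).map ((↑) : ℝ → AddCircle p)).map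
          (AddCircle.equivIoc p b)).map Subtype.val := by
        rw [Measure.map_map hmeas AddCircle.measurable_mk',
          Measure.map_map measurable_subtype_coe (hmeas.comp AddCircle.measurable_mk')]
        rfl
    _ = volume.restrict (Ioc b (b + p)) := by
        rw [(AddCircle.measurePreserving_mk p a).map_eq,
          (AddCircle.measurePreserving_equivIoc p).map_eq,
          map_comap_subtype_coe measurableSet_Ioc]

lemma floor_add_half_sub_eq_toIocMod (v : ℝ) :
    (⌊v + 1 / 2⌋ : ℝ) - v = toIocMod one_pos (-(1 / 2)) (-v) := by
  refine ((toIocMod_eq_iff one_pos).2 ⟨⟨?_, ?_⟩, -⌊v + 1 / 2⌋, by simp; ring⟩).symm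
  · linarith [Int.lt_floor_add_one (v + 1 / 2)]
  · linarith [Int.floor_le (v + 1 / 2)]

lemma map_const_sub_volume_restrict_Icc (c a b : ℝ) :
    (volume.restrict (Icc a b)).map (c - ·) = volume.restrict (Icc (c - b) (c - a)) := by
  rw [((Measure.measurePreserving_sub_left volume c).restrict_image_emb
    (MeasurableEquiv.subLeft c).measurableEmbedding _).map_eq, image_const_sub_Icc]

lemma map_floor_add_half_sub_volume_restrict (x : ℝ) :
    (volume.restrict (Icc (-(1 / 2) : ℝ) (1 / 2))).map (fun e => (⌊x + e + 1 / 2⌋ : ℝ) - e) =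
      (volume.restrict (Icc (-(1 / 2) : ℝ) (1 / 2))).map (x + ·) := by
  set ρ := volume.restrict (Icc (-(1 / 2) : ℝ) (1 / 2))
  have hround : (fun e => (⌊x + e + 1 / 2⌋ : ℝ) - e) =
      (x + ·) ∘ toIocMod one_pos (-(1 / 2)) ∘ (-x - ·) := by
    ext e
    rw [Function.comp_apply, Function.comp_apply, show -x - e = -(x + e) by ring,
      ← floor_add_half_sub_eq_toIocMod]
    ring
  have herror : (ρ.map (-x - ·)).map (toIocMod one_pos (-(1 / 2))) = ρ := by
    rw [map_const_sub_volume_restrict_Icc, ← restrict_Ioc_eq_restrict_Icc,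
      show -x - -(1 / 2) = -x - 1 / 2 + 1 by ring, map_toIocMod_volume_restrict_Ioc,
      show -(1 / 2) + 1 = (1 / 2 : ℝ) by norm_num, restrict_Ioc_eq_restrict_Icc]
  rw [hround, ← Measure.map_map (by fun_prop) ((measurable_toIocMod _ _).comp (by fun_prop)),
    ← Measure.map_map (measurable_toIocMod _ _) (by fun_prop), herror]

lemma MeasureTheory.Measure.map_prod_fiberwise_eq {α β γ : Type*} [MeasurableSpace α]
    [MeasurableSpace β] [MeasurableSpace γ] (μ : Measure α) (ν : Measure β) [SFinite ν]
    {f g : α → β → γ} (hf : Measurable (Function.uncurry f)) (hg : Measurable (Function.uncurry g))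
    (hfg : ∀ a, ν.map (f a) = ν.map (g a)) :
    (μ.prod ν).map (fun p => (p.1, f p.1 p.2)) = (μ.prod ν).map (fun p => (p.1, g p.1 p.2)) := by
  have hF : Measurable fun p : α × β => (p.1, f p.1 p.2) := measurable_fst.prodMk hf
  have hG : Measurable fun p : α × β => (p.1, g p.1 p.2) := measurable_fst.prodMk hg
  ext s hs
  rw [Measure.map_apply hF hs, Measure.map_apply hG hs, Measure.prod_apply (hF hs),
    Measure.prod_apply (hG hs)]
  refine lintegral_congr fun a => ?_
  have hslice : MeasurableSet (Prod.mk a ⁻¹' s) := measurable_prodMk_left hs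
  change ν (f a ⁻¹' (Prod.mk a ⁻¹' s)) = ν (g a ⁻¹' (Prod.mk a ⁻¹' s))
  rw [← Measure.map_apply hf.of_uncurry_left hslice, ← Measure.map_apply hg.of_uncurry_left hslice,
    hfg]

/-- Zamir–Feder dithered quantization: if `ε ~ Uniform[−1/2, 1/2]` is
independent of `X` and `Q` rounds to the nearest integer (`Q x = ⌊x + 1/2⌋`), then
`(X, Q(X + ε) − ε)` has the same joint distribution as `(X, X + ε)`. -/
theorem stmt_14 (Ω : Type*) [MeasurableSpace Ω] (μ : Measure Ω) [IsProbabilityMeasure μ]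
    (X ε : Ω → ℝ) (hX : Measurable X) (hε : Measurable ε)
    (hindep : IndepFun X ε μ)
    (hunif : Measure.map ε μ = volume.restrict (Set.Icc (-(1 / 2) : ℝ) (1 / 2))) :
    Measure.map (fun ω => (X ω, (⌊X ω + ε ω + 1 / 2⌋ : ℝ) - ε ω)) μ =
      Measure.map (fun ω => (X ω, X ω + ε ω)) μ := by
  have hlaw : μ.map (fun ω => (X ω, ε ω)) =
      (μ.map X).prod (volume.restrict (Icc (-(1 / 2) : ℝ) (1 / 2))) := by
    rw [← hunif]
    exact (indepFun_iff_map_prod_eq_prod_map_map hX.aemeasurable hε.aemeasurable).1 hindep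
  have hround : Measurable (Function.uncurry fun x e : ℝ => (⌊x + e + 1 / 2⌋ : ℝ) - e) := by
    fun_prop
  calc μ.map (fun ω => (X ω, (⌊X ω + ε ω + 1 / 2⌋ : ℝ) - ε ω))
      = (μ.map fun ω => (X ω, ε ω)).map fun p => (p.1, (⌊p.1 + p.2 + 1 / 2⌋ : ℝ) - p.2) :=
        (Measure.map_map (measurable_fst.prodMk hround) (hX.prodMk hε)).symm
    _ = (μ.map fun ω => (X ω, ε ω)).map fun p => (p.1, p.1 + p.2) := by
        rw [hlaw]
        exact Measure.map_prod_fiberwise_eq _ _ hround (by fun_prop)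
          map_floor_add_half_sub_volume_restrict
    _ = μ.map (fun ω => (X ω, X ω + ε ω)) :=
        Measure.map_map (by fun_prop) (hX.prodMk hε)
end

section
/- Let Z be a standard Gaussian random variable and ε ~ Uniform[−1/2,1/2] independent of Z. Then the Fisher information J(ε + √s·Z) (of the density of ε + √s·Z with respect to location) is strictly decreasing in s > 0. -/
open MeasureTheory ProbabilityTheory

/-- The density of `ε + √s·Z` where `Z` is standard Gaussian and `ε ~ Uniform[−1/2,1/2]` is
independent of `Z`: the convolution of the `N(0, s)` density with the uniform density. -/
noncomputable def ditherGaussDensity (s : ℝ) (x : ℝ) : ℝ :=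
  ∫ u in Set.Icc (-(1 / 2) : ℝ) (1 / 2), gaussianPDFReal 0 (Real.toNNReal s) (x - u)

/-- The (location) Fisher information of the density of `ε + √s·Z`. -/
noncomputable def ditherGaussFisherInfo (s : ℝ) : ℝ :=
  ∫ x : ℝ, (deriv (ditherGaussDensity s) x) ^ 2 / ditherGaussDensity s x

/-! Write `p_s` for the density of `ε + √s·Z` and `g_τ` for the `N(0, τ)` density. The Gaussian
semigroup gives `p_{τ+s} = g_τ ⋆ p_s` and `p'_{τ+s} = g_τ ⋆ p'_s`, so Cauchy–Schwarz with weight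
`y ↦ g_τ(y) p_s(x - y)` yields `p'_{τ+s}(x)² / p_{τ+s}(x) ≤ (g_τ ⋆ (p'_s² / p_s))(x)`; this is
strict because the score `p'_s / p_s` is not constant. Integrating in `x` gives
`J(τ + s) < J(s)`. -/

open Real
open scoped Convolution

noncomputable def gaussKernel (a x : ℝ) : ℝ := (√(2 * π * a))⁻¹ * exp (-x ^ 2 / (2 * a))

section GaussKernel

variable {a b : ℝ}

lemma gaussianPDFReal_zero_toNNReal (ha : 0 ≤ a) (x : ℝ) :
    gaussianPDFReal 0 a.toNNReal x = gaussKernel a x := by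
  simp [gaussianPDFReal_def, gaussKernel, Real.coe_toNNReal a ha]

lemma gaussKernel_pos (ha : 0 < a) (x : ℝ) : 0 < gaussKernel a x := by
  unfold gaussKernel; positivity

@[fun_prop]
lemma continuous_gaussKernel (a : ℝ) : Continuous (gaussKernel a) := by
  unfold gaussKernel; fun_prop

lemma integrable_gaussKernel (ha : 0 ≤ a) : Integrable (gaussKernel a) :=
  (integrable_gaussianPDFReal 0 a.toNNReal).congr
    (ae_of_all _ (gaussianPDFReal_zero_toNNReal ha))

lemma integral_gaussKernel (ha : 0 < a) : ∫ x, gaussKernel a x = 1 := by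
  simpa only [gaussianPDFReal_zero_toNNReal ha.le] using
    integral_gaussianPDFReal_eq_one 0 (Real.toNNReal_pos.2 ha).ne'

lemma gaussKernel_le_of_abs_le (ha : 0 < a) {x y : ℝ} (h : |x| ≤ |y|) :
    gaussKernel a y ≤ gaussKernel a x := by
  have hsq : x ^ 2 ≤ y ^ 2 := sq_le_sq.2 h
  unfold gaussKernel
  gcongr

lemma gaussKernel_lt_of_abs_lt (ha : 0 < a) {x y : ℝ} (h : |x| < |y|) :
    gaussKernel a y < gaussKernel a x := by
  have hsq : x ^ 2 < y ^ 2 := sq_lt_sq.2 h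
  unfold gaussKernel
  gcongr

@[simp]
lemma gaussKernel_neg (a x : ℝ) : gaussKernel a (-x) = gaussKernel a x := by
  simp [gaussKernel]

lemma gaussKernel_le_gaussKernel_zero (ha : 0 < a) (x : ℝ) : gaussKernel a x ≤ gaussKernel a 0 :=
  gaussKernel_le_of_abs_le ha (by simp)

-- Completing the square in `y`.
lemma gaussKernel_mul_gaussKernel (ha : 0 < a) (hb : 0 < b) (z y : ℝ) :
    gaussKernel a y * gaussKernel b (z - y) =
      gaussKernel (a + b) z * gaussKernel (a * b / (a + b)) (y - a * z / (a + b)) := by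
  have hab : 0 < a + b := by linarith
  have hnorm : (√(2 * π * a))⁻¹ * (√(2 * π * b))⁻¹ =
      (√(2 * π * (a + b)))⁻¹ * (√(2 * π * (a * b / (a + b))))⁻¹ := by
    rw [← mul_inv, ← mul_inv, ← sqrt_mul (by positivity), ← sqrt_mul (by positivity)]
    congr 2
    field_simp
  have hexp : -y ^ 2 / (2 * a) + -(z - y) ^ 2 / (2 * b) =
      -z ^ 2 / (2 * (a + b)) + -(y - a * z / (a + b)) ^ 2 / (2 * (a * b / (a + b))) := by
    field_simp
    ring
  unfold gaussKernel
  calc _ = ((√(2 * π * a))⁻¹ * (√(2 * π * b))⁻¹) *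
        exp (-y ^ 2 / (2 * a) + -(z - y) ^ 2 / (2 * b)) := by rw [exp_add]; ring
    _ = _ := by rw [hnorm, hexp, exp_add]; ring

lemma gaussKernel_convolution (ha : 0 < a) (hb : 0 < b) (z : ℝ) :
    (gaussKernel a ⋆[ContinuousLinearMap.mul ℝ ℝ] gaussKernel b) z = gaussKernel (a + b) z := by
  have hc : 0 < a * b / (a + b) := by positivity
  simp only [convolution_mul, gaussKernel_mul_gaussKernel ha hb, integral_const_mul,
    integral_sub_right_eq_self (gaussKernel _), integral_gaussKernel hc, mul_one]

end GaussKernel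

noncomputable def ditherGaussDeriv (s x : ℝ) : ℝ :=
  gaussKernel s (x + 1 / 2) - gaussKernel s (x - 1 / 2)

section DitherGaussDensity

variable {s : ℝ}

lemma ditherGaussDensity_eq_intervalIntegral (hs : 0 ≤ s) (x : ℝ) :
    ditherGaussDensity s x = ∫ w in (x - 1 / 2)..(x + 1 / 2), gaussKernel s w := by
  simp_rw [ditherGaussDensity, gaussianPDFReal_zero_toNNReal hs]
  rw [integral_Icc_eq_integral_Ioc, ← intervalIntegral.integral_of_le (by norm_num),
    intervalIntegral.integral_comp_sub_left (gaussKernel s) x]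
  ring_nf

lemma hasDerivAt_ditherGaussDensity (hs : 0 ≤ s) (x : ℝ) :
    HasDerivAt (ditherGaussDensity s) (ditherGaussDeriv s x) x := by
  have hc := continuous_gaussKernel s
  have hprim : ∀ u, HasDerivAt (fun v => ∫ w in (0 : ℝ)..v, gaussKernel s w) (gaussKernel s u) u :=
    fun u => (hc.integral_hasStrictDerivAt 0 u).hasDerivAt
  have hfun : ditherGaussDensity s = fun x =>
      (∫ w in (0 : ℝ)..(x + 1 / 2), gaussKernel s w) -
        ∫ w in (0 : ℝ)..(x - 1 / 2), gaussKernel s w := by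
    funext y
    rw [ditherGaussDensity_eq_intervalIntegral hs, intervalIntegral.integral_interval_sub_left
      (hc.intervalIntegrable _ _) (hc.intervalIntegrable _ _)]
  rw [hfun]
  exact ((hprim _).comp_add_const x (1 / 2)).sub ((hprim _).comp_sub_const x (1 / 2))

lemma continuous_ditherGaussDensity (hs : 0 ≤ s) : Continuous (ditherGaussDensity s) :=
  continuous_iff_continuousAt.2 fun x => (hasDerivAt_ditherGaussDensity hs x).continuousAt

lemma continuous_ditherGaussDeriv (s : ℝ) : Continuous (ditherGaussDeriv s) := by
  unfold ditherGaussDeriv; fun_prop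

lemma gaussKernel_abs_add_half_le_ditherGaussDensity (hs : 0 < s) (x : ℝ) :
    gaussKernel s (|x| + 1 / 2) ≤ ditherGaussDensity s x := by
  rw [ditherGaussDensity_eq_intervalIntegral hs.le]
  calc gaussKernel s (|x| + 1 / 2)
      = ∫ _ in (x - 1 / 2)..(x + 1 / 2), gaussKernel s (|x| + 1 / 2) := by norm_num
    _ ≤ ∫ w in (x - 1 / 2)..(x + 1 / 2), gaussKernel s w := by
      refine intervalIntegral.integral_mono_on (by linarith) (by simp)
        ((continuous_gaussKernel s).intervalIntegrable _ _) fun w hw => ?_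
      refine gaussKernel_le_of_abs_le hs ?_
      rw [abs_of_nonneg (by positivity : (0 : ℝ) ≤ |x| + 1 / 2), abs_le]
      obtain ⟨hw₁, hw₂⟩ := hw
      constructor <;> cases abs_cases x <;> linarith

lemma ditherGaussDensity_pos (hs : 0 < s) (x : ℝ) : 0 < ditherGaussDensity s x :=
  (gaussKernel_pos hs _).trans_le (gaussKernel_abs_add_half_le_ditherGaussDensity hs x)

lemma ditherGaussDensity_le (hs : 0 < s) (x : ℝ) : ditherGaussDensity s x ≤ gaussKernel s 0 := by
  rw [ditherGaussDensity_eq_intervalIntegral hs.le]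
  calc ∫ w in (x - 1 / 2)..(x + 1 / 2), gaussKernel s w
      ≤ ∫ _ in (x - 1 / 2)..(x + 1 / 2), gaussKernel s 0 :=
        intervalIntegral.integral_mono_on (by linarith)
          ((continuous_gaussKernel s).intervalIntegrable _ _) (by simp)
          fun w _ => gaussKernel_le_gaussKernel_zero hs w
    _ = gaussKernel s 0 := by norm_num

lemma abs_ditherGaussDeriv_le (hs : 0 < s) (x : ℝ) :
    |ditherGaussDeriv s x| ≤ gaussKernel s (|x| - 1 / 2) := by
  have h₁ : gaussKernel s (x + 1 / 2) ≤ gaussKernel s (|x| - 1 / 2) :=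
    gaussKernel_le_of_abs_le hs (by simpa using abs_abs_sub_abs_le_abs_sub x (-(1 / 2)))
  have h₂ : gaussKernel s (x - 1 / 2) ≤ gaussKernel s (|x| - 1 / 2) :=
    gaussKernel_le_of_abs_le hs (by simpa using abs_abs_sub_abs_le_abs_sub x (1 / 2))
  rw [ditherGaussDeriv, abs_sub_le_iff]
  constructor <;> linarith [gaussKernel_pos hs (x + 1 / 2), gaussKernel_pos hs (x - 1 / 2)]

lemma ditherGaussDeriv_ne_const_mul (hs : 0 < s) (c : ℝ) :
    ¬ ∀ z, ditherGaussDeriv s z = c * ditherGaussDensity s z := by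
  intro h
  have hc : c = 0 := by
    have h0 : c * ditherGaussDensity s 0 = 0 := by simpa [ditherGaussDeriv, eq_comm] using h 0
    exact (mul_eq_zero.1 h0).resolve_right (ditherGaussDensity_pos hs 0).ne'
  have h1 : ditherGaussDeriv s 1 < 0 :=
    sub_neg.2 (gaussKernel_lt_of_abs_lt hs (by norm_num [abs_of_pos]))
  simpa [hc, h1.ne] using h 1

end DitherGaussDensity

lemma MeasureTheory.Integrable.mul_comp_sub_of_abs_le {μ : Measure ℝ} {g F : ℝ → ℝ}
    (hg : Integrable g μ) (hF : Continuous F) {C : ℝ} (hC : ∀ z, |F z| ≤ C) (x : ℝ) :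
    Integrable (fun y => g y * F (x - y)) μ :=
  hg.mul_bdd (hF.comp (continuous_sub_left x)).aestronglyMeasurable
    (ae_of_all _ fun y => hC (x - y))

section Convolution

variable {τ s : ℝ}

lemma integrable_gaussKernel_mul_comp_sub (hτ : 0 < τ) (hs : 0 < s) (x : ℝ) :
    Integrable (fun y => gaussKernel τ y * gaussKernel s (x - y)) :=
  (integrable_gaussKernel hτ.le).mul_comp_sub_of_abs_le (continuous_gaussKernel s)
    (fun z => (abs_of_pos (gaussKernel_pos hs z)).trans_le (gaussKernel_le_gaussKernel_zero hs z)) x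

lemma gaussKernel_convolution_ditherGaussDensity (hτ : 0 < τ) (hs : 0 < s) (x : ℝ) :
    (gaussKernel τ ⋆[ContinuousLinearMap.mul ℝ ℝ] ditherGaussDensity s) x =
      ditherGaussDensity (τ + s) x := by
  have hdens : ∀ r, 0 ≤ r → ∀ z,
      ditherGaussDensity r z = ∫ u in Set.Icc (-(1 / 2) : ℝ) (1 / 2), gaussKernel r (z - u) :=
    fun r hr z => by simp_rw [ditherGaussDensity, gaussianPDFReal_zero_toNNReal hr]
  have hint : Integrable (Function.uncurry fun y u => gaussKernel τ y * gaussKernel s (x - u - y))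
      (volume.prod (volume.restrict (Set.Icc (-(1 / 2) : ℝ) (1 / 2)))) := by
    refine ((integrable_gaussKernel hτ.le).mul_prod (integrable_const (gaussKernel s 0))).mono'
      (by fun_prop) (ae_of_all _ fun ⟨y, u⟩ => ?_)
    rw [Function.uncurry_apply_pair,
      Real.norm_of_nonneg (mul_pos (gaussKernel_pos hτ _) (gaussKernel_pos hs _)).le]
    exact mul_le_mul_of_nonneg_left (gaussKernel_le_gaussKernel_zero hs _) (gaussKernel_pos hτ _).le
  calc (gaussKernel τ ⋆[ContinuousLinearMap.mul ℝ ℝ] ditherGaussDensity s) x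
      = ∫ y, ∫ u in Set.Icc (-(1 / 2) : ℝ) (1 / 2),
          gaussKernel τ y * gaussKernel s (x - u - y) := by
        simp_rw [convolution_mul, hdens s hs.le, ← integral_const_mul, sub_right_comm]
    _ = ∫ u in Set.Icc (-(1 / 2) : ℝ) (1 / 2), ∫ y, gaussKernel τ y * gaussKernel s (x - u - y) :=
        integral_integral_swap hint
    _ = ∫ u in Set.Icc (-(1 / 2) : ℝ) (1 / 2), gaussKernel (τ + s) (x - u) := by
        congr 1 with u
        exact gaussKernel_convolution hτ hs (x - u)
    _ = ditherGaussDensity (τ + s) x := (hdens _ (by positivity) x).symm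

lemma gaussKernel_convolution_ditherGaussDeriv (hτ : 0 < τ) (hs : 0 < s) (x : ℝ) :
    (gaussKernel τ ⋆[ContinuousLinearMap.mul ℝ ℝ] ditherGaussDeriv s) x =
      ditherGaussDeriv (τ + s) x := by
  simp_rw [convolution_mul, ditherGaussDeriv, sub_add_eq_add_sub, sub_right_comm _ _ (1 / 2 : ℝ),
    mul_sub]
  rw [integral_sub (integrable_gaussKernel_mul_comp_sub hτ hs _)
    (integrable_gaussKernel_mul_comp_sub hτ hs _)]
  exact congr_arg₂ _ (gaussKernel_convolution hτ hs _) (gaussKernel_convolution hτ hs _)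

lemma gaussKernel_mul_ditherGaussDeriv_not_ae_eq (hτ : 0 < τ) (hs : 0 < s) (x c : ℝ) :
    ¬ (fun y => gaussKernel τ y * ditherGaussDeriv s (x - y)) =ᵐ[volume]
      fun y => c * (gaussKernel τ y * ditherGaussDensity s (x - y)) := by
  intro h
  have hcont := continuous_ditherGaussDensity hs.le
  have hcont' := continuous_ditherGaussDeriv s
  have heq := (Continuous.ae_eq_iff_eq volume (by fun_prop) (by fun_prop)).1 h
  refine ditherGaussDeriv_ne_const_mul hs c fun z => ?_
  have hz := congrFun heq (x - z)
  simp only [sub_sub_cancel] at hz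
  exact mul_left_cancel₀ (gaussKernel_pos hτ (x - z)).ne' (hz.trans (by ring))

end Convolution

noncomputable def ditherGaussFisherIntegrand (s x : ℝ) : ℝ :=
  ditherGaussDeriv s x ^ 2 / ditherGaussDensity s x

section FisherIntegrand

variable {s : ℝ}

lemma ditherGaussFisherInfo_eq_integral (hs : 0 ≤ s) :
    ditherGaussFisherInfo s = ∫ x, ditherGaussFisherIntegrand s x := by
  simp only [ditherGaussFisherInfo, ditherGaussFisherIntegrand,
    (hasDerivAt_ditherGaussDensity hs _).deriv]

lemma ditherGaussFisherIntegrand_nonneg (hs : 0 < s) (x : ℝ) :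
    0 ≤ ditherGaussFisherIntegrand s x :=
  div_nonneg (sq_nonneg _) (ditherGaussDensity_pos hs x).le

lemma continuous_ditherGaussFisherIntegrand (hs : 0 < s) :
    Continuous (ditherGaussFisherIntegrand s) :=
  ((continuous_ditherGaussDeriv s).pow 2).div (continuous_ditherGaussDensity hs.le)
    fun x => (ditherGaussDensity_pos hs x).ne'

-- The exponents differ by `(a - 3) ^ 2 / (4 * s)`.
lemma gaussKernel_sub_half_sq_le (hs : 0 < s) (a : ℝ) :
    gaussKernel s (a - 1 / 2) ^ 2 ≤
      gaussKernel s 0 * exp (17 / (8 * s)) * exp (-(4 * s)⁻¹ * a ^ 2) *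
        gaussKernel s (a + 1 / 2) := by
  have hexp : 2 * (-(a - 1 / 2) ^ 2 / (2 * s)) ≤
      17 / (8 * s) + -(4 * s)⁻¹ * a ^ 2 + -(a + 1 / 2) ^ 2 / (2 * s) := by
    have : 0 ≤ (a - 3) ^ 2 / (4 * s) := by positivity
    have key : 17 / (8 * s) + -(4 * s)⁻¹ * a ^ 2 + -(a + 1 / 2) ^ 2 / (2 * s) -
        2 * (-(a - 1 / 2) ^ 2 / (2 * s)) = (a - 3) ^ 2 / (4 * s) := by
      field_simp
      ring
    linarith
  calc gaussKernel s (a - 1 / 2) ^ 2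
      = (√(2 * π * s))⁻¹ ^ 2 * exp (2 * (-(a - 1 / 2) ^ 2 / (2 * s))) := by
        rw [gaussKernel, mul_pow, ← exp_nat_mul]; norm_num
    _ ≤ (√(2 * π * s))⁻¹ ^ 2 *
          exp (17 / (8 * s) + -(4 * s)⁻¹ * a ^ 2 + -(a + 1 / 2) ^ 2 / (2 * s)) := by
        gcongr
    _ = _ := by simp only [gaussKernel, exp_add]; norm_num; ring

lemma ditherGaussFisherIntegrand_le (hs : 0 < s) (x : ℝ) :
    ditherGaussFisherIntegrand s x ≤
      gaussKernel s 0 * exp (17 / (8 * s)) * exp (-(4 * s)⁻¹ * x ^ 2) := by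
  have hlow := gaussKernel_pos hs (|x| + 1 / 2)
  have habs := abs_ditherGaussDeriv_le hs x
  calc ditherGaussFisherIntegrand s x
      ≤ gaussKernel s (|x| - 1 / 2) ^ 2 / gaussKernel s (|x| + 1 / 2) :=
        div_le_div₀ (sq_nonneg _) (sq_le_sq' (abs_le.1 habs).1 (abs_le.1 habs).2) hlow
          (gaussKernel_abs_add_half_le_ditherGaussDensity hs x)
    _ ≤ _ := by
        rw [div_le_iff₀ hlow]
        simpa only [sq_abs] using gaussKernel_sub_half_sq_le hs |x|

lemma ditherGaussFisherIntegrand_le_const (hs : 0 < s) (x : ℝ) :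
    ditherGaussFisherIntegrand s x ≤ gaussKernel s 0 * exp (17 / (8 * s)) := by
  refine (ditherGaussFisherIntegrand_le hs x).trans (mul_le_of_le_one_right ?_ ?_)
  · exact (mul_pos (gaussKernel_pos hs 0) (exp_pos _)).le
  · exact exp_le_one_iff.2
      (mul_nonpos_of_nonpos_of_nonneg (neg_nonpos.2 (by positivity)) (sq_nonneg x))

lemma integrable_ditherGaussFisherIntegrand (hs : 0 < s) :
    Integrable (ditherGaussFisherIntegrand s) :=
  ((integrable_exp_neg_mul_sq (by positivity : 0 < (4 * s)⁻¹)).const_mul _).mono'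
    (continuous_ditherGaussFisherIntegrand hs).aestronglyMeasurable
    (ae_of_all _ fun x => by
      rw [Real.norm_of_nonneg (ditherGaussFisherIntegrand_nonneg hs x)]
      exact ditherGaussFisherIntegrand_le hs x)

end FisherIntegrand

section StrictInequalities

variable {α : Type*} [MeasurableSpace α] {μ : Measure α}

lemma integral_lt_integral_of_forall_lt [NeZero μ] {f g : α → ℝ} (hf : Integrable f μ)
    (hg : Integrable g μ) (h : ∀ a, f a < g a) : ∫ a, f a ∂μ < ∫ a, g a ∂μ := by
  have hsupp : Function.support (fun a => g a - f a) = Set.univ :=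
    Set.eq_univ_of_forall fun a => (sub_pos.2 (h a)).ne'
  rw [← sub_pos, ← integral_sub hg hf,
    integral_pos_iff_support_of_nonneg (fun a => (sub_pos.2 (h a)).le) (hg.sub hf), hsupp]
  exact Measure.measure_univ_pos.2 (NeZero.ne μ)

-- Expand `0 ≤ ∫ (f - l w)² / w` with `l = ∫ f / ∫ w`; equality would force `f = l w` a.e.
lemma sq_integral_lt_integral_sq_div_mul_integral {f w : α → ℝ} (hw : ∀ a, 0 < w a)
    (hf : Integrable f μ) (hwi : Integrable w μ) (hfw : Integrable (fun a => f a ^ 2 / w a) μ)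
    (hprop : ∀ c : ℝ, ¬ f =ᵐ[μ] fun a => c * w a) :
    (∫ a, f a ∂μ) ^ 2 < (∫ a, f a ^ 2 / w a ∂μ) * ∫ a, w a ∂μ := by
  have : NeZero μ := ⟨by rintro rfl; exact hprop 0 (by simp [Filter.EventuallyEq])⟩
  have hW : 0 < ∫ a, w a ∂μ := by
    simpa using integral_lt_integral_of_forall_lt (integrable_zero α ℝ μ) hwi hw
  set l := (∫ a, f a ∂μ) / ∫ a, w a ∂μ with hl
  have hexpand : ∀ a, (f a - l * w a) ^ 2 / w a = f a ^ 2 / w a - 2 * l * f a + l ^ 2 * w a := by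
    intro a
    field_simp [(hw a).ne']
    ring
  have hint₁ : Integrable (fun a => f a ^ 2 / w a - 2 * l * f a) μ := hfw.sub (hf.const_mul _)
  have hint : Integrable (fun a => (f a - l * w a) ^ 2 / w a) μ := by
    simp_rw [hexpand]
    exact hint₁.add (hwi.const_mul _)
  have hval : ∫ a, (f a - l * w a) ^ 2 / w a ∂μ =
      ∫ a, f a ^ 2 / w a ∂μ - (∫ a, f a ∂μ) ^ 2 / ∫ a, w a ∂μ := by
    simp_rw [hexpand]
    rw [integral_add hint₁ (hwi.const_mul _),
      integral_sub hfw (hf.const_mul _), integral_const_mul, integral_const_mul, hl]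
    field_simp
    ring
  have hpos : 0 < ∫ a, (f a - l * w a) ^ 2 / w a ∂μ := by
    refine (integral_nonneg fun a => div_nonneg (sq_nonneg _) (hw a).le).lt_of_ne fun h0 => ?_
    refine hprop l ?_
    filter_upwards [(integral_eq_zero_iff_of_nonneg
      (fun a => div_nonneg (sq_nonneg _) (hw a).le) hint).1 h0.symm] with a ha
    have := (div_eq_zero_iff.1 ha).resolve_right (hw a).ne'
    linarith [pow_eq_zero_iff (n := 2) two_ne_zero |>.1 this]
  rw [hval, sub_pos, div_lt_iff₀ hW] at hpos
  exact hpos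

end StrictInequalities

lemma ditherGaussFisherIntegrand_lt_convolution {τ s : ℝ} (hτ : 0 < τ) (hs : 0 < s) (x : ℝ) :
    ditherGaussFisherIntegrand (τ + s) x <
      (gaussKernel τ ⋆[ContinuousLinearMap.mul ℝ ℝ] ditherGaussFisherIntegrand s) x := by
  have hg := integrable_gaussKernel hτ.le
  have hfw : ∀ y, (gaussKernel τ y * ditherGaussDeriv s (x - y)) ^ 2 /
      (gaussKernel τ y * ditherGaussDensity s (x - y)) =
        gaussKernel τ y * ditherGaussFisherIntegrand s (x - y) := fun y => by
    rw [ditherGaussFisherIntegrand]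
    field_simp [(gaussKernel_pos hτ y).ne', (ditherGaussDensity_pos hs (x - y)).ne']
  have hCS := sq_integral_lt_integral_sq_div_mul_integral
    (fun y => mul_pos (gaussKernel_pos hτ y) (ditherGaussDensity_pos hs (x - y)))
    (hg.mul_comp_sub_of_abs_le (continuous_ditherGaussDeriv s)
      (fun z => (abs_ditherGaussDeriv_le hs z).trans (gaussKernel_le_gaussKernel_zero hs _)) x)
    (hg.mul_comp_sub_of_abs_le (continuous_ditherGaussDensity hs.le)
      (fun z => (abs_of_pos (ditherGaussDensity_pos hs z)).trans_le (ditherGaussDensity_le hs z)) x)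
    (by
      simp_rw [hfw]
      exact hg.mul_comp_sub_of_abs_le (continuous_ditherGaussFisherIntegrand hs)
        (fun z => (abs_of_nonneg (ditherGaussFisherIntegrand_nonneg hs z)).le.trans
          (ditherGaussFisherIntegrand_le_const hs z)) x)
    (gaussKernel_mul_ditherGaussDeriv_not_ae_eq hτ hs x)
  simp_rw [hfw] at hCS
  rw [ditherGaussFisherIntegrand, div_lt_iff₀ (ditherGaussDensity_pos (by positivity) x),
    ← gaussKernel_convolution_ditherGaussDeriv hτ hs,
    ← gaussKernel_convolution_ditherGaussDensity hτ hs]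
  exact hCS

/-- the Fisher information `J(ε + √s·Z)` is strictly decreasing in `s > 0`. -/
theorem stmt_15 : StrictAntiOn ditherGaussFisherInfo (Set.Ioi (0 : ℝ)) := by
  intro s (hs : 0 < s) t (ht : 0 < t) hst
  have hτ : 0 < t - s := sub_pos.2 hst
  have hint := integrable_ditherGaussFisherIntegrand hs
  calc ditherGaussFisherInfo t = ∫ x, ditherGaussFisherIntegrand t x :=
        ditherGaussFisherInfo_eq_integral ht.le
    _ < ∫ x, (gaussKernel (t - s) ⋆[ContinuousLinearMap.mul ℝ ℝ] ditherGaussFisherIntegrand s) x :=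
        integral_lt_integral_of_forall_lt (integrable_ditherGaussFisherIntegrand ht)
          ((integrable_gaussKernel hτ.le).integrable_convolution _ hint)
          fun x => by
            simpa only [sub_add_cancel] using ditherGaussFisherIntegrand_lt_convolution hτ hs x
    _ = ∫ x, ditherGaussFisherIntegrand s x := by
        rw [integral_convolution _ (integrable_gaussKernel hτ.le) hint, integral_gaussKernel hτ]
        simp
    _ = ditherGaussFisherInfo s := (ditherGaussFisherInfo_eq_integral hs.le).symm
end

section
/- For any δ > 0, the perturbation (y₁, y₂) ↦ (y₁ + δ, y₂ − δ) with y₁ ≥ y₂ ≥ δ > 0 satisfies: σ₁² (y₁+δ)/(σ²+y₁+δ) + σ₂² (y₂−δ)/(σ²+y₂−δ) > σ₁² y₁/(σ²+y₁) + σ₂² y₂/(σ²+y₂) whenever σ₁² > σ₂² > 0, σ² > 0, y₁ = y₂, and δ is sufficiently small. -/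
/-- local Robin-Hood perturbation: if `σ₁² > σ₂² > 0`, `σ² > 0`,
`y₁ = y₂ > 0`, then for all sufficiently small `δ > 0`,
`σ₁²(y₁+δ)/(σ²+y₁+δ) + σ₂²(y₂−δ)/(σ²+y₂−δ) > σ₁²y₁/(σ²+y₁) + σ₂²y₂/(σ²+y₂)`. -/
theorem stmt_19 (s1 s2 σ2 y1 y2 : ℝ)
    (hs : s1 > s2) (hs2 : s2 > 0) (hσ2 : 0 < σ2)
    (hy : y1 = y2) (hy2 : 0 < y2) (hy12 : y1 ≥ y2) :
    ∃ δ0 > 0, ∀ δ : ℝ, 0 < δ → δ < δ0 →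
      s1 * ((y1 + δ) / (σ2 + y1 + δ)) + s2 * ((y2 - δ) / (σ2 + y2 - δ)) >
        s1 * (y1 / (σ2 + y1)) + s2 * (y2 / (σ2 + y2)) := by
  subst hy
  refine ⟨min y1 ((s1 - s2) * (σ2 + y1) / (s1 + s2)), ?_, ?_⟩
  · have h1 : (0:ℝ) < (s1 - s2) * (σ2 + y1) / (s1 + s2) := by
      apply div_pos
      · nlinarith
      · linarith
    exact lt_min hy2 h1
  · intro δ hδ hδ0
    have hδy : δ < y1 := lt_of_lt_of_le hδ0 (min_le_left _ _)
    have hδs : δ < (s1 - s2) * (σ2 + y1) / (s1 + s2) :=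
      lt_of_lt_of_le hδ0 (min_le_right _ _)
    have hδs' : δ * (s1 + s2) < (s1 - s2) * (σ2 + y1) := by
      rw [← lt_div_iff₀ (by linarith)]; exact hδs
    have hA : (0:ℝ) < σ2 + y1 + δ := by linarith
    have hB : (0:ℝ) < σ2 + y1 - δ := by linarith
    have hC : (0:ℝ) < σ2 + y1 := by linarith
    rw [gt_iff_lt, ← sub_pos]
    have key : s1 * ((y1 + δ) / (σ2 + y1 + δ)) + s2 * ((y1 - δ) / (σ2 + y1 - δ)) -
        (s1 * (y1 / (σ2 + y1)) + s2 * (y1 / (σ2 + y1))) =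
        σ2 * δ * (s1 * (σ2 + y1 - δ) - s2 * (σ2 + y1 + δ)) /
          ((σ2 + y1 + δ) * (σ2 + y1 - δ) * (σ2 + y1)) := by
      field_simp
      ring
    rw [key]
    apply div_pos
    · nlinarith [mul_pos hσ2 hδ]
    · positivity
end
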